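/- arXiv:1305.4990 — 2 statements merged into one kernel-verified Lean document; each statement's English description precedes it below -/
import Mathlib

section
/- (Semi-Gyrocircle Gyrotriangle.) Let O ∈ 𝔹, 0 < R < s, and let A1, A2, A3 ∈ 𝔹 be pairwise distinct, not collinear in ℝⁿ, with |OA1| = |OA2| = |OA3| = R, and suppose O lies strictly between A1 and A2 on the Euclidean segment from A1 to A2 (so that A1A2 is a gyrodiameter of the gyrocircle). Let α1, α2, α3 be the gyroangles of gyrotriangle A1A2A3 at A1, A2, A3 and δ = π − α1 − α2 − α3 its defect. Then α3 = α1 + α2; equivalently, α3 + δ/2 = π/2. -/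
open RealInnerProductSpace

/-- Lorentz gamma factor of a vector `v` in the `s`-ball of `ℝⁿ`. -/
noncomputable def egamma {n : ℕ} (s : ℝ) (v : EuclideanSpace ℝ (Fin n)) : ℝ :=
  1 / Real.sqrt (1 - ‖v‖ ^ 2 / s ^ 2)

/-- Einstein addition on the `s`-ball of `ℝⁿ`. -/
noncomputable def eadd {n : ℕ} (s : ℝ) (u v : EuclideanSpace ℝ (Fin n)) :
    EuclideanSpace ℝ (Fin n) :=
  (1 / (1 + ⟪u, v⟫ / s ^ 2)) •
    (u + (1 / egamma s u) • v + (egamma s u / (s ^ 2 * (1 + egamma s u))) • ⟪u, v⟫ • u)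

/-- Gyroangle at vertex `X` between points `Y` and `Z`. -/
noncomputable def gyroangle {n : ℕ} (s : ℝ) (X Y Z : EuclideanSpace ℝ (Fin n)) : ℝ :=
  Real.arccos ⟪‖eadd s (-X) Y‖⁻¹ • eadd s (-X) Y, ‖eadd s (-X) Z‖⁻¹ • eadd s (-X) Z⟫

/-- Gamma factor of a real gyrodistance `d`. -/
noncomputable def gammaR (s d : ℝ) : ℝ := 1 / Real.sqrt (1 - d ^ 2 / s ^ 2)

/-! Seen from a point `X` of the ball, the map `P ↦ ⊖X ⊕ P` is affine on Euclidean segments up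
to a positive factor. Hence, `O` being strictly between `A1` and `A2`, the gyroangle at `A1`
between `A2` and `A3` equals the one between `O` and `A3` (likewise at `A2`), and the gyroray from
`A3` towards `O` splits the gyroangle at `A3` into two parts. The gyrotriangles `O A1 A3` and
`O A2 A3` are isosceles, and by Einstein's law of gyrocosines (the inner product of `⊖X ⊕ Y` and
`⊖X ⊕ Z` depends only on the three relative Lorentz factors) their base gyroangles agree, so the
two parts are `α1` and `α2`. -/

namespace InnerProductGeometry

variable {V : Type*} [NormedAddCommGroup V] [InnerProductSpace ℝ V]

lemma angle_add_angle_of_pos_combination (u v : V) {a b : ℝ} (ha : 0 < a) (hb : 0 < b)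
    (hw : a • u + b • v ≠ 0) :
    angle u (a • u + b • v) + angle (a • u + b • v) v = angle u v := by
  rcases eq_or_ne u v with rfl | huv
  · have hu : u ≠ 0 := by rintro rfl; simp at hw
    rw [← add_smul, angle_smul_right_of_pos _ _ (add_pos ha hb),
      angle_smul_left_of_pos _ _ (add_pos ha hb), angle_self hu, add_zero]
  · have hab : 0 < a + b := add_pos ha hb
    have hx : Sbtw ℝ u (AffineMap.lineMap u v (b / (a + b))) v :=
      sbtw_lineMap_iff.mpr ⟨huv, div_pos hb hab, (div_lt_one hab).mpr (by linarith)⟩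
    have hw' : a • u + b • v = (a + b) • AffineMap.lineMap u v (b / (a + b)) := by
      rw [AffineMap.lineMap_apply_module]
      match_scalars
      · field_simp
        ring
      · field_simp
    have := EuclideanGeometry.angle_add_angle_eq_of_sbtw (p := (0 : V)) hx
    simp only [EuclideanGeometry.angle, vsub_eq_sub, sub_zero] at this
    rw [hw', angle_smul_right_of_pos _ _ hab, angle_smul_left_of_pos _ _ hab, this]

end InnerProductGeometry

section Einstein

variable {n : ℕ} {s : ℝ} {X Y Z : EuclideanSpace ℝ (Fin n)}

lemma egamma_neg (s : ℝ) (v : EuclideanSpace ℝ (Fin n)) : egamma s (-v) = egamma s v := by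
  simp [egamma]

lemma inner_lt_sq (hX : ‖X‖ < s) (hY : ‖Y‖ < s) : ⟪X, Y⟫ < s ^ 2 := by
  nlinarith [real_inner_le_norm X Y, norm_nonneg X, norm_nonneg Y]

lemma one_sub_inner_div_pos (hX : ‖X‖ < s) (hY : ‖Y‖ < s) : 0 < 1 - ⟪X, Y⟫ / s ^ 2 := by
  have hs : 0 < s := (norm_nonneg X).trans_lt hX
  rw [sub_pos, div_lt_one (by positivity)]
  exact inner_lt_sq hX hY

lemma egamma_pos (hX : ‖X‖ < s) : 0 < egamma s X := by
  have := one_sub_inner_div_pos hX hX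
  rw [real_inner_self_eq_norm_sq] at this
  unfold egamma
  positivity

lemma egamma_sq_mul (hX : ‖X‖ < s) : egamma s X ^ 2 * (s ^ 2 - ‖X‖ ^ 2) = s ^ 2 := by
  have hs : 0 < s := (norm_nonneg X).trans_lt hX
  have h := one_sub_inner_div_pos hX hX
  have h' := (inner_lt_sq hX hX).ne'
  rw [real_inner_self_eq_norm_sq] at h h'
  unfold egamma
  rw [div_pow, one_pow, Real.sq_sqrt h.le]
  field_simp

/-- Lorentz factor of the relative velocity `⊖X ⊕ Y`; see `egamma_eadd_neg`. -/
noncomputable def relGamma (s : ℝ) (X Y : EuclideanSpace ℝ (Fin n)) : ℝ :=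
  egamma s X * egamma s Y * (1 - ⟪X, Y⟫ / s ^ 2)

lemma relGamma_comm (s : ℝ) (X Y : EuclideanSpace ℝ (Fin n)) :
    relGamma s X Y = relGamma s Y X := by
  rw [relGamma, relGamma, real_inner_comm]
  ring

lemma relGamma_pos (hX : ‖X‖ < s) (hY : ‖Y‖ < s) : 0 < relGamma s X Y :=
  mul_pos (mul_pos (egamma_pos hX) (egamma_pos hY)) (one_sub_inner_div_pos hX hY)

lemma relGamma_self (hX : ‖X‖ < s) : relGamma s X X = 1 := by
  have hs : 0 < s := (norm_nonneg X).trans_lt hX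
  have h := egamma_sq_mul hX
  rw [relGamma, real_inner_self_eq_norm_sq]
  field_simp
  linear_combination h

lemma smul_eadd_neg (hX : ‖X‖ < s) (hY : ‖Y‖ < s) :
    (egamma s X * (1 - ⟪X, Y⟫ / s ^ 2)) • eadd s (-X) Y =
      Y - (egamma s X - egamma s X ^ 2 * ⟪X, Y⟫ / (s ^ 2 * (1 + egamma s X))) • X := by
  have hs : 0 < s := (norm_nonneg X).trans_lt hX
  have hg := egamma_pos hX
  have hD := sub_ne_zero.mpr (inner_lt_sq hX hY).ne'
  unfold eadd
  simp only [egamma_neg, inner_neg_left, neg_div, ← sub_eq_add_neg, smul_smul]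
  match_scalars
  · field_simp
    ring
  · field_simp

lemma eadd_neg_self (hX : ‖X‖ < s) : eadd s (-X) X = 0 := by
  have hs : 0 < s := (norm_nonneg X).trans_lt hX
  have hg := egamma_pos hX
  have h := smul_eadd_neg hX hX
  have hμ : egamma s X - egamma s X ^ 2 * ⟪X, X⟫ / (s ^ 2 * (1 + egamma s X)) = 1 := by
    have hsq := egamma_sq_mul hX
    rw [real_inner_self_eq_norm_sq]
    field_simp
    linear_combination hsq
  rw [hμ, one_smul, sub_self] at h
  exact (smul_eq_zero.mp h).resolve_left
    (mul_pos hg (one_sub_inner_div_pos hX hX)).ne'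

lemma inner_eadd_neg_mul (hX : ‖X‖ < s) (hY : ‖Y‖ < s) (hZ : ‖Z‖ < s) :
    ⟪eadd s (-X) Y, eadd s (-X) Z⟫ * (relGamma s X Y * relGamma s X Z) =
      s ^ 2 * (relGamma s X Y * relGamma s X Z - relGamma s Y Z) := by
  have hs : 0 < s := (norm_nonneg X).trans_lt hX
  have hg := egamma_pos hX
  have hnX : ‖X‖ ^ 2 = s ^ 2 * (egamma s X ^ 2 - 1) / egamma s X ^ 2 := by
    field_simp
    linear_combination -egamma_sq_mul hX
  have hfactor : ⟪eadd s (-X) Y, eadd s (-X) Z⟫ * (relGamma s X Y * relGamma s X Z) =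
      egamma s Y * egamma s Z * ⟪(egamma s X * (1 - ⟪X, Y⟫ / s ^ 2)) • eadd s (-X) Y,
        (egamma s X * (1 - ⟪X, Z⟫ / s ^ 2)) • eadd s (-X) Z⟫ := by
    rw [real_inner_smul_left, real_inner_smul_right, relGamma, relGamma]
    ring
  rw [hfactor, smul_eadd_neg hX hY, smul_eadd_neg hX hZ]
  simp only [inner_sub_left, inner_sub_right, real_inner_smul_left, real_inner_smul_right,
    real_inner_self_eq_norm_sq, real_inner_comm X Y, hnX, relGamma]
  field_simp
  ring

lemma norm_eadd_neg_sq_mul (hX : ‖X‖ < s) (hY : ‖Y‖ < s) :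
    ‖eadd s (-X) Y‖ ^ 2 * relGamma s X Y ^ 2 = s ^ 2 * (relGamma s X Y ^ 2 - 1) := by
  have h := inner_eadd_neg_mul hX hY hY
  rw [real_inner_self_eq_norm_sq, relGamma_self hY] at h
  linear_combination h

lemma egamma_eadd_neg (hX : ‖X‖ < s) (hY : ‖Y‖ < s) :
    egamma s (eadd s (-X) Y) = relGamma s X Y := by
  have hs : 0 < s := (norm_nonneg X).trans_lt hX
  have hG := relGamma_pos hX hY
  have h : 1 - ‖eadd s (-X) Y‖ ^ 2 / s ^ 2 = (relGamma s X Y)⁻¹ ^ 2 := by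
    field_simp
    linear_combination -norm_eadd_neg_sq_mul hX hY
  rw [egamma, h, Real.sqrt_sq (inv_nonneg.mpr hG.le), one_div, inv_inv]

lemma norm_eadd_neg_comm (hX : ‖X‖ < s) (hY : ‖Y‖ < s) :
    ‖eadd s (-X) Y‖ = ‖eadd s (-Y) X‖ := by
  have hG := relGamma_pos hX hY
  have h := norm_eadd_neg_sq_mul hY hX
  rw [relGamma_comm, ← norm_eadd_neg_sq_mul hX hY] at h
  exact (pow_left_inj₀ (norm_nonneg _) (norm_nonneg _) two_ne_zero).mp
    (mul_right_cancel₀ (pow_ne_zero 2 hG.ne') h).symm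

lemma relGamma_eq_of_norm_eq {W : EuclideanSpace ℝ (Fin n)} (hX : ‖X‖ < s) (hY : ‖Y‖ < s)
    (hZ : ‖Z‖ < s) (hW : ‖W‖ < s) (h : ‖eadd s (-X) Y‖ = ‖eadd s (-Z) W‖) :
    relGamma s X Y = relGamma s Z W := by
  rw [← egamma_eadd_neg hX hY, ← egamma_eadd_neg hZ hW, egamma, egamma, h]

/-- On a Euclidean segment, `P ↦ ⊖X ⊕ P` is affine up to a positive scalar factor, so an
interior point of `YZ` is sent into the open cone spanned by the images of `Y` and `Z`. -/
lemma eadd_neg_eq_pos_combination_of_sbtw {P : EuclideanSpace ℝ (Fin n)} (hX : ‖X‖ < s)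
    (hY : ‖Y‖ < s) (hZ : ‖Z‖ < s) (h : Sbtw ℝ Y P Z) :
    ∃ a b : ℝ, 0 < a ∧ 0 < b ∧ eadd s (-X) P = a • eadd s (-X) Y + b • eadd s (-X) Z := by
  have hP : ‖P‖ < s := mem_ball_zero_iff.mp <|
    (convex_ball 0 s).mem_of_wbtw h.wbtw (mem_ball_zero_iff.mpr hY) (mem_ball_zero_iff.mpr hZ)
  obtain ⟨t, ⟨ht0, ht1⟩, rfl⟩ := h.mem_image_Ioo
  have hg := egamma_pos hX
  have hDY := mul_pos hg (one_sub_inner_div_pos hX hY)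
  have hDZ := mul_pos hg (one_sub_inner_div_pos hX hZ)
  have hDP := mul_pos hg (one_sub_inner_div_pos hX hP)
  have key : (egamma s X * (1 - ⟪X, AffineMap.lineMap Y Z t⟫ / s ^ 2)) •
      eadd s (-X) (AffineMap.lineMap Y Z t) =
        ((1 - t) * (egamma s X * (1 - ⟪X, Y⟫ / s ^ 2))) • eadd s (-X) Y +
          (t * (egamma s X * (1 - ⟪X, Z⟫ / s ^ 2))) • eadd s (-X) Z := by
    rw [mul_smul (1 - t), mul_smul t, smul_eadd_neg hX hY, smul_eadd_neg hX hZ,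
      smul_eadd_neg hX hP, AffineMap.lineMap_apply_module]
    simp only [inner_add_right, real_inner_smul_right]
    module
  refine ⟨_, _, div_pos (mul_pos (sub_pos.mpr ht1) hDY) hDP, div_pos (mul_pos ht0 hDZ) hDP, ?_⟩
  rw [← inv_smul_smul₀ hDP.ne' (eadd s (-X) _), key, smul_add, smul_smul, smul_smul,
    inv_mul_eq_div, inv_mul_eq_div]

lemma gyroangle_eq_angle (s : ℝ) (X Y Z : EuclideanSpace ℝ (Fin n)) :
    gyroangle s X Y Z = InnerProductGeometry.angle (eadd s (-X) Y) (eadd s (-X) Z) := by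
  rw [gyroangle, InnerProductGeometry.angle, real_inner_smul_left, real_inner_smul_right]
  ring_nf

lemma gyroangle_comm (s : ℝ) (X Y Z : EuclideanSpace ℝ (Fin n)) :
    gyroangle s X Y Z = gyroangle s X Z Y := by
  rw [gyroangle_eq_angle, gyroangle_eq_angle, InnerProductGeometry.angle_comm]

lemma gyroangle_of_sbtw_left {P : EuclideanSpace ℝ (Fin n)} (hX : ‖X‖ < s) (hY : ‖Y‖ < s)
    (h : Sbtw ℝ X P Y) : gyroangle s X P Z = gyroangle s X Y Z := by
  obtain ⟨a, b, -, hb, hP⟩ := eadd_neg_eq_pos_combination_of_sbtw hX hX hY h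
  rw [eadd_neg_self hX, smul_zero, zero_add] at hP
  rw [gyroangle_eq_angle, gyroangle_eq_angle, hP,
    InnerProductGeometry.angle_smul_left_of_pos _ _ hb]

lemma gyroangle_add_gyroangle_of_sbtw {P : EuclideanSpace ℝ (Fin n)} (hX : ‖X‖ < s)
    (hY : ‖Y‖ < s) (hZ : ‖Z‖ < s) (h : Sbtw ℝ Y P Z) (hP : eadd s (-X) P ≠ 0) :
    gyroangle s X Y P + gyroangle s X P Z = gyroangle s X Y Z := by
  obtain ⟨a, b, ha, hb, hPab⟩ := eadd_neg_eq_pos_combination_of_sbtw hX hY hZ h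
  rw [hPab] at hP
  rw [gyroangle_eq_angle, gyroangle_eq_angle, gyroangle_eq_angle, hPab,
    InnerProductGeometry.angle_add_angle_of_pos_combination _ _ ha hb hP]

lemma gyroangle_eq_of_norm_eq {O : EuclideanSpace ℝ (Fin n)} (hX : ‖X‖ < s) (hY : ‖Y‖ < s)
    (hO : ‖O‖ < s) (h : ‖eadd s (-O) X‖ = ‖eadd s (-O) Y‖) :
    gyroangle s X O Y = gyroangle s Y O X := by
  have hγ : relGamma s O X = relGamma s O Y := relGamma_eq_of_norm_eq hO hX hO hY h
  have hprod : relGamma s X O * relGamma s X Y = relGamma s Y O * relGamma s Y X := by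
    rw [relGamma_comm s X O, relGamma_comm s Y O, relGamma_comm s Y X, hγ]
  have hinner : ⟪eadd s (-X) O, eadd s (-X) Y⟫ = ⟪eadd s (-Y) O, eadd s (-Y) X⟫ := by
    apply mul_right_cancel₀ (mul_pos (relGamma_pos hX hO) (relGamma_pos hX hY)).ne'
    rw [inner_eadd_neg_mul hX hO hY, hprod, inner_eadd_neg_mul hY hO hX, hγ]
  have hnorm : ‖eadd s (-X) O‖ * ‖eadd s (-X) Y‖ = ‖eadd s (-Y) O‖ * ‖eadd s (-Y) X‖ := by
    rw [norm_eadd_neg_comm hX hO, h, ← norm_eadd_neg_comm hY hO, norm_eadd_neg_comm hX hY]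
  rw [gyroangle_eq_angle, gyroangle_eq_angle, InnerProductGeometry.angle, hinner, hnorm,
    InnerProductGeometry.angle]

end Einstein

theorem semi_gyrocircle_gyrotriangle_general {n : ℕ} (s : ℝ)
    (O A1 A2 A3 : EuclideanSpace ℝ (Fin n)) (hO : ‖O‖ < s)
    (R : ℝ) (hRpos : 0 < R)
    (hA1 : ‖A1‖ < s) (hA2 : ‖A2‖ < s) (hA3 : ‖A3‖ < s)
    (hR1 : ‖eadd s (-O) A1‖ = R) (hR2 : ‖eadd s (-O) A2‖ = R)
    (hR3 : ‖eadd s (-O) A3‖ = R)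
    (hbtw : Sbtw ℝ A1 O A2)
    (α1 α2 α3 δ : ℝ)
    (hα1 : α1 = gyroangle s A1 A2 A3)
    (hα2 : α2 = gyroangle s A2 A1 A3)
    (hα3 : α3 = gyroangle s A3 A1 A2)
    (hδ : δ = Real.pi - α1 - α2 - α3) :
    α3 = α1 + α2 ∧ α3 + δ / 2 = Real.pi / 2 := by
  have hOA3 : eadd s (-A3) O ≠ 0 := by
    rw [← norm_pos_iff, norm_eadd_neg_comm hA3 hO, hR3]
    exact hRpos
  have hα1' : α1 = gyroangle s A3 A1 O := by
    rw [hα1, ← gyroangle_of_sbtw_left hA1 hA2 hbtw,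
      gyroangle_eq_of_norm_eq hA1 hA3 hO (hR1.trans hR3.symm), gyroangle_comm]
  have hα2' : α2 = gyroangle s A3 O A2 := by
    rw [hα2, ← gyroangle_of_sbtw_left hA2 hA1 hbtw.symm,
      gyroangle_eq_of_norm_eq hA2 hA3 hO (hR2.trans hR3.symm)]
  have hsum : α3 = α1 + α2 := by
    rw [hα3, hα1', hα2', gyroangle_add_gyroangle_of_sbtw hA3 hA1 hA2 hbtw hOA3]
  exact ⟨hsum, by rw [hδ, hsum]; ring⟩

/-- **Semi-Gyrocircle Gyrotriangle Theorem**: an inscribed gyroangle subtending a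
gyrodiameter satisfies `α3 = α1 + α2`, i.e. `α3 + δ/2 = π/2`. -/
theorem semi_gyrocircle_gyrotriangle {n : ℕ} (hn : 2 ≤ n) (s : ℝ) (hs : 0 < s)
    (O A1 A2 A3 : EuclideanSpace ℝ (Fin n)) (hO : ‖O‖ < s)
    (R : ℝ) (hRpos : 0 < R) (hRs : R < s)
    (hA1 : ‖A1‖ < s) (hA2 : ‖A2‖ < s) (hA3 : ‖A3‖ < s)
    (h12 : A1 ≠ A2) (h13 : A1 ≠ A3) (h23 : A2 ≠ A3)
    (hncol : ¬ Collinear ℝ ({A1, A2, A3} : Set (EuclideanSpace ℝ (Fin n))))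
    (hR1 : ‖eadd s (-O) A1‖ = R) (hR2 : ‖eadd s (-O) A2‖ = R)
    (hR3 : ‖eadd s (-O) A3‖ = R)
    (hbtw : Sbtw ℝ A1 O A2)
    (α1 α2 α3 δ : ℝ)
    (hα1 : α1 = gyroangle s A1 A2 A3)
    (hα2 : α2 = gyroangle s A2 A1 A3)
    (hα3 : α3 = gyroangle s A3 A1 A2)
    (hδ : δ = Real.pi - α1 - α2 - α3) :
    α3 = α1 + α2 ∧ α3 + δ / 2 = Real.pi / 2 :=
  semi_gyrocircle_gyrotriangle_general s O A1 A2 A3 hO R hRpos hA1 hA2 hA3 hR1 hR2 hR3 hbtw α1 α2 α3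
    δ hα1 hα2 hα3 hδ
end

section
/- (Point to Circumgyrocenter Gyrodistance.) Let A1, A2, A3 ∈ 𝔹 be pairwise distinct and not collinear in ℝⁿ, with circumgyrocenter O = (m1·γ_{A1}·A1 + m2·γ_{A2}·A2 + m3·γ_{A3}·A3)/(m1·γ_{A1} + m2·γ_{A2} + m3·γ_{A3}) ∈ 𝔹, where m1 = (γ12 + γ13 − γ23 − 1)(γ23 − 1), m2 = (γ12 − γ13 + γ23 − 1)(γ13 − 1), m3 = (−γ12 + γ13 + γ23 − 1)(γ12 − 1) and the denominator is nonzero; let R = ‖⊖A1 ⊕ O‖ and γ_R = 1/√(1 − R²/s²). Let w1, w2, w3 ∈ ℝ with M := w1 + w2 + w3 ≠ 0 and W := w1·γ_{A1} + w2·γ_{A2} + w3·γ_{A3} ≠ 0, and suppose A := (w1·γ_{A1}·A1 + w2·γ_{A2}·A2 + w3·γ_{A3}·A3)/W lies in 𝔹. Set K = w1w2(γ12 − 1) + w1w3(γ13 − 1) + w2w3(γ23 − 1). Then the gyrodistance d = ‖⊖A ⊕ O‖ satisfies d² = R²·(1 − 2s²K/(M²·γ_R²·R²)). -/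
open RealInnerProductSpace

/-!
By the gamma identity `γ(⊖u ⊕ v) = γ_u γ_v (1 - ⟪u, v⟫ / s²)`, the gamma factor `γ(⊖P ⊕ X)` of a
gyrobarycentric combination `P = (∑ wᵢ γ_{Aᵢ} Aᵢ) / W` is affine in the weights:
`W γ(⊖P ⊕ X) = γ_P ∑ wᵢ γ(⊖Aᵢ ⊕ X)`. Taking `X = P` and `X = Aⱼ` gives the gyrobarycentric
constant `W² = γ_P² ∑ᵢⱼ wᵢ wⱼ γᵢⱼ`, which is `γ_P² (M² + 2K)` for three points. The circumgyrocenter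
weights make `∑ᵢ mᵢ γᵢⱼ` independent of `j`, so `γ(⊖Aⱼ ⊕ O) = γ_R` for all `j`; hence
`γ(⊖A ⊕ O)² (M² + 2K) = M² γ_R²`, and `d² = s² (1 - 1 / γ(⊖A ⊕ O)²)` gives the formula.
-/

variable {n : ℕ} {s : ℝ} {u v X : EuclideanSpace ℝ (Fin n)}

lemma one_sub_norm_sq_div_sq_pos (hs : 0 < s) (hu : ‖u‖ < s) : 0 < 1 - ‖u‖ ^ 2 / s ^ 2 := by
  rw [sub_pos, div_lt_one (by positivity)]
  exact pow_lt_pow_left₀ hu (norm_nonneg u) two_ne_zero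

lemma egamma_pos_s17 (hs : 0 < s) (hu : ‖u‖ < s) : 0 < egamma s u := by
  have := one_sub_norm_sq_div_sq_pos hs hu
  rw [egamma]; positivity

lemma egamma_sq_mul_eq_one (hs : 0 < s) (hu : ‖u‖ < s) :
    egamma s u ^ 2 * (1 - ‖u‖ ^ 2 / s ^ 2) = 1 := by
  have h := one_sub_norm_sq_div_sq_pos hs hu
  rw [egamma, div_pow, one_pow, Real.sq_sqrt h.le, one_div, inv_mul_cancel₀ h.ne']

lemma norm_sq_eq_sub_div_egamma_sq (hs : 0 < s) (hu : ‖u‖ < s) :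
    ‖u‖ ^ 2 = s ^ 2 - s ^ 2 / egamma s u ^ 2 := by
  have h := egamma_sq_mul_eq_one hs hu
  have := (egamma_pos_s17 hs hu).ne'
  field_simp at h ⊢
  linear_combination -h

lemma abs_inner_lt_sq (hu : ‖u‖ < s) (hv : ‖v‖ < s) : |⟪u, v⟫| < s ^ 2 := calc
  |⟪u, v⟫| ≤ ‖u‖ * ‖v‖ := abs_real_inner_le_norm u v
  _ < s * s := mul_lt_mul'' hu hv (norm_nonneg u) (norm_nonneg v)
  _ = s ^ 2 := (sq s).symm

lemma one_add_inner_div_sq_pos (hs : 0 < s) (hu : ‖u‖ < s) (hv : ‖v‖ < s) :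
    0 < 1 + ⟪u, v⟫ / s ^ 2 := by
  have := (abs_lt.1 (abs_inner_lt_sq hu hv)).1
  rw [one_add_div (by positivity)]
  exact div_pos (by linarith) (by positivity)

lemma one_sub_norm_eadd_sq_div_sq (hs : 0 < s) (hu : ‖u‖ < s) (hv : ‖v‖ < s) :
    1 - ‖eadd s u v‖ ^ 2 / s ^ 2 =
      (1 - ‖u‖ ^ 2 / s ^ 2) * (1 - ‖v‖ ^ 2 / s ^ 2) / (1 + ⟪u, v⟫ / s ^ 2) ^ 2 := by
  have hP : s ^ 2 + ⟪u, v⟫ ≠ 0 :=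
    (by linarith [(abs_lt.1 (abs_inner_lt_sq hu hv)).1] : 0 < s ^ 2 + ⟪u, v⟫).ne'
  have hg := (egamma_pos_s17 hs hu).ne'
  have hg1 : 1 + egamma s u ≠ 0 := by linarith [egamma_pos_s17 hs hu]
  have hx : u + (1 / egamma s u) • v + (egamma s u / (s ^ 2 * (1 + egamma s u))) • ⟪u, v⟫ • u =
      (1 + egamma s u / (s ^ 2 * (1 + egamma s u)) * ⟪u, v⟫) • u + (egamma s u)⁻¹ • v := by
    module
  rw [eadd, hx, norm_smul, mul_pow, norm_add_sq_real, norm_smul, norm_smul, real_inner_smul_left,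
    real_inner_smul_right]
  simp only [Real.norm_eq_abs, mul_pow, sq_abs]
  rw [norm_sq_eq_sub_div_egamma_sq hs hu]
  field_simp
  ring

lemma norm_lt_of_one_sub_norm_sq_div_sq_pos (hs : 0 < s) (h : 0 < 1 - ‖u‖ ^ 2 / s ^ 2) :
    ‖u‖ < s := by
  rw [sub_pos, div_lt_one (by positivity)] at h
  exact lt_of_pow_lt_pow_left₀ 2 hs.le h

lemma norm_eadd_lt (hs : 0 < s) (hu : ‖u‖ < s) (hv : ‖v‖ < s) : ‖eadd s u v‖ < s := by
  apply norm_lt_of_one_sub_norm_sq_div_sq_pos hs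
  rw [one_sub_norm_eadd_sq_div_sq hs hu hv]
  have := one_sub_norm_sq_div_sq_pos hs hu
  have := one_sub_norm_sq_div_sq_pos hs hv
  have := one_add_inner_div_sq_pos hs hu hv
  positivity

lemma egamma_eadd (hs : 0 < s) (hu : ‖u‖ < s) (hv : ‖v‖ < s) :
    egamma s (eadd s u v) = egamma s u * egamma s v * (1 + ⟪u, v⟫ / s ^ 2) := by
  have hu' := one_sub_norm_sq_div_sq_pos hs hu
  have hv' := one_sub_norm_sq_div_sq_pos hs hv
  have hP := one_add_inner_div_sq_pos hs hu hv
  rw [egamma, one_sub_norm_eadd_sq_div_sq hs hu hv, Real.sqrt_div' _ (sq_nonneg _),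
    Real.sqrt_mul hu'.le, Real.sqrt_sq hP.le, egamma, egamma]
  have := (Real.sqrt_pos.2 hu').ne'
  have := (Real.sqrt_pos.2 hv').ne'
  field_simp

lemma egamma_neg_s17 : egamma s (-u) = egamma s u := by simp [egamma]

lemma egamma_neg_eadd (hs : 0 < s) (hu : ‖u‖ < s) (hv : ‖v‖ < s) :
    egamma s (eadd s (-u) v) = egamma s u * egamma s v * (1 - ⟪u, v⟫ / s ^ 2) := by
  rw [egamma_eadd hs (by rwa [norm_neg]) hv, egamma_neg_s17, inner_neg_left, neg_div, ← sub_eq_add_neg]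

lemma norm_neg_eadd_lt (hs : 0 < s) (hu : ‖u‖ < s) (hv : ‖v‖ < s) : ‖eadd s (-u) v‖ < s :=
  norm_eadd_lt hs (by rwa [norm_neg]) hv

lemma egamma_neg_eadd_comm (hs : 0 < s) (hu : ‖u‖ < s) (hv : ‖v‖ < s) :
    egamma s (eadd s (-u) v) = egamma s (eadd s (-v) u) := by
  rw [egamma_neg_eadd hs hu hv, egamma_neg_eadd hs hv hu, real_inner_comm]
  ring

lemma egamma_neg_eadd_self (hs : 0 < s) (hu : ‖u‖ < s) : egamma s (eadd s (-u) u) = 1 := by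
  rw [egamma_neg_eadd hs hu hu, real_inner_self_eq_norm_sq]
  linear_combination egamma_sq_mul_eq_one hs hu

lemma eq_of_egamma_neg_eadd_eq_one (hs : 0 < s) (hu : ‖u‖ < s) (hv : ‖v‖ < s)
    (h : egamma s (eadd s (-u) v) = 1) : u = v := by
  rw [egamma_neg_eadd hs hu hv] at h
  have hgu := egamma_sq_mul_eq_one hs hu
  have hgv := egamma_sq_mul_eq_one hs hv
  have key : (1 - ⟪u, v⟫ / s ^ 2) ^ 2 = (1 - ‖u‖ ^ 2 / s ^ 2) * (1 - ‖v‖ ^ 2 / s ^ 2) := by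
    have h2 : (egamma s u * egamma s v * (1 - ⟪u, v⟫ / s ^ 2)) ^ 2 = 1 := by rw [h, one_pow]
    linear_combination (1 - ‖u‖ ^ 2 / s ^ 2) * (1 - ‖v‖ ^ 2 / s ^ 2) * h2
      - (1 - ⟪u, v⟫ / s ^ 2) ^ 2 * egamma s v ^ 2 * (1 - ‖v‖ ^ 2 / s ^ 2) * hgu
      - (1 - ⟪u, v⟫ / s ^ 2) ^ 2 * hgv
  obtain ⟨x, rfl⟩ : ∃ x, v = u - x := ⟨u - v, (sub_sub_cancel u v).symm⟩
  rw [norm_sub_sq_real, inner_sub_right, real_inner_self_eq_norm_sq] at key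
  have hs2 : 0 < s ^ 2 - ‖u‖ ^ 2 := sub_pos.2 (pow_lt_pow_left₀ hu (norm_nonneg u) two_ne_zero)
  have hx : (s ^ 2 - ‖u‖ ^ 2) * ‖x‖ ^ 2 + ⟪u, x⟫ ^ 2 = 0 := by
    field_simp at key
    linear_combination key
  have : ‖x‖ ^ 2 = 0 := by nlinarith [sq_nonneg ⟪u, x⟫, sq_nonneg ‖x‖]
  rw [pow_eq_zero_iff two_ne_zero, norm_eq_zero] at this
  rw [this, sub_zero]

lemma norm_neg_eadd_ne_zero_of_egamma_neg_eadd_eq (hs : 0 < s) (hu : ‖u‖ < s) (hv : ‖v‖ < s)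
    (hX : ‖X‖ < s) (huv : u ≠ v) (h : egamma s (eadd s (-u) X) = egamma s (eadd s (-v) X)) :
    ‖eadd s (-u) X‖ ≠ 0 := by
  intro h0
  have hu1 : egamma s (eadd s (-u) X) = 1 := by rw [egamma, h0]; norm_num
  exact huv ((eq_of_egamma_neg_eadd_eq_one hs hu hX hu1).trans
    (eq_of_egamma_neg_eadd_eq_one hs hv hX (h ▸ hu1)).symm)

lemma norm_sq_eq_of_egamma_sq_mul_eq {x y : EuclideanSpace ℝ (Fin n)} {M K : ℝ} (hs : 0 < s)
    (hx : ‖x‖ < s) (hy : ‖y‖ < s) (hy0 : ‖y‖ ≠ 0) (hM : M ≠ 0)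
    (h : egamma s x ^ 2 * (M ^ 2 + 2 * K) = M ^ 2 * egamma s y ^ 2) :
    ‖x‖ ^ 2 = ‖y‖ ^ 2 * (1 - 2 * s ^ 2 * K / (M ^ 2 * gammaR s ‖y‖ ^ 2 * ‖y‖ ^ 2)) := by
  have hgx := (egamma_pos_s17 hs hx).ne'
  have hgy := (egamma_pos_s17 hs hy).ne'
  rw [show gammaR s ‖y‖ = egamma s y from rfl, norm_sq_eq_sub_div_egamma_sq hs hx]
  field_simp
  rw [norm_sq_eq_sub_div_egamma_sq hs hy]
  field_simp
  linear_combination h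

section Gyrobarycenter

variable {ι : Type*} [Fintype ι] {w : ι → ℝ} {A : ι → EuclideanSpace ℝ (Fin n)}

noncomputable def gyrobarycenter (s : ℝ) (w : ι → ℝ) (A : ι → EuclideanSpace ℝ (Fin n)) :
    EuclideanSpace ℝ (Fin n) :=
  (∑ i, w i * egamma s (A i))⁻¹ • ∑ i, (w i * egamma s (A i)) • A i

lemma sum_mul_one_sub_inner_gyrobarycenter (hW : ∑ i, w i * egamma s (A i) ≠ 0) :
    (∑ i, w i * egamma s (A i)) * (1 - ⟪gyrobarycenter s w A, X⟫ / s ^ 2) =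
      ∑ i, w i * egamma s (A i) * (1 - ⟪A i, X⟫ / s ^ 2) := by
  simp only [gyrobarycenter, real_inner_smul_left, sum_inner, mul_sub, mul_one,
    Finset.sum_sub_distrib, ← Finset.sum_div, ← mul_div_assoc, ← mul_assoc, mul_inv_cancel₀ hW,
    one_mul]

lemma sum_mul_egamma_neg_gyrobarycenter_eadd (hs : 0 < s) (hA : ∀ i, ‖A i‖ < s)
    (hW : ∑ i, w i * egamma s (A i) ≠ 0) (hP : ‖gyrobarycenter s w A‖ < s) (hX : ‖X‖ < s) :
    (∑ i, w i * egamma s (A i)) * egamma s (eadd s (-gyrobarycenter s w A) X) =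
      egamma s (gyrobarycenter s w A) * ∑ i, w i * egamma s (eadd s (-A i) X) := by
  simp only [egamma_neg_eadd hs hP hX, egamma_neg_eadd hs (hA _) hX]
  calc _ = egamma s (gyrobarycenter s w A) * egamma s X *
        ((∑ i, w i * egamma s (A i)) * (1 - ⟪gyrobarycenter s w A, X⟫ / s ^ 2)) := by ring
    _ = _ := by
      rw [sum_mul_one_sub_inner_gyrobarycenter hW, Finset.mul_sum, Finset.mul_sum]
      exact Finset.sum_congr rfl fun i _ => by ring

lemma sq_sum_mul_egamma_eq_egamma_gyrobarycenter_sq_mul (hs : 0 < s) (hA : ∀ i, ‖A i‖ < s)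
    (hW : ∑ i, w i * egamma s (A i) ≠ 0) (hP : ‖gyrobarycenter s w A‖ < s) :
    (∑ i, w i * egamma s (A i)) ^ 2 = egamma s (gyrobarycenter s w A) ^ 2 *
      ∑ i, ∑ j, w i * w j * egamma s (eadd s (-A i) (A j)) := by
  set P := gyrobarycenter s w A
  set W := ∑ i, w i * egamma s (A i)
  have hself : W = egamma s P * ∑ i, w i * egamma s (eadd s (-P) (A i)) := by
    have := sum_mul_egamma_neg_gyrobarycenter_eadd hs hA hW hP hP
    rw [egamma_neg_eadd_self hs hP, mul_one] at this
    simpa only [egamma_neg_eadd_comm hs (hA _) hP] using this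
  have hvertex (i : ι) : W * egamma s (eadd s (-P) (A i)) =
      egamma s P * ∑ j, w j * egamma s (eadd s (-A j) (A i)) :=
    sum_mul_egamma_neg_gyrobarycenter_eadd hs hA hW hP (hA i)
  calc W ^ 2 = W * (egamma s P * ∑ i, w i * egamma s (eadd s (-P) (A i))) := by
        rw [sq]; nth_rw 2 [hself]
    _ = egamma s P * ∑ i, w i * (W * egamma s (eadd s (-P) (A i))) := by
        rw [Finset.mul_sum, Finset.mul_sum, Finset.mul_sum]
        exact Finset.sum_congr rfl fun i _ => by ring
    _ = _ := by
      simp only [hvertex, Finset.mul_sum]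
      rw [Finset.sum_comm]
      exact Finset.sum_congr rfl fun i _ => Finset.sum_congr rfl fun j _ => by ring

lemma egamma_neg_gyrobarycenter_eadd_sq_mul_of_forall_egamma_eq (hs : 0 < s)
    (hA : ∀ i, ‖A i‖ < s) (hW : ∑ i, w i * egamma s (A i) ≠ 0)
    (hP : ‖gyrobarycenter s w A‖ < s) (hX : ‖X‖ < s) {c : ℝ}
    (hc : ∀ i, egamma s (eadd s (-A i) X) = c) :
    egamma s (eadd s (-gyrobarycenter s w A) X) ^ 2 *
        ∑ i, ∑ j, w i * w j * egamma s (eadd s (-A i) (A j)) = (∑ i, w i) ^ 2 * c ^ 2 := by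
  have hdist := sum_mul_egamma_neg_gyrobarycenter_eadd hs hA hW hP hX
  have hconst := sq_sum_mul_egamma_eq_egamma_gyrobarycenter_sq_mul hs hA hW hP
  simp only [hc, ← Finset.sum_mul] at hdist
  apply mul_left_cancel₀ (pow_ne_zero 2 (egamma_pos_s17 hs hP).ne')
  linear_combination (-egamma s (eadd s (-gyrobarycenter s w A) X) ^ 2) * hconst +
    ((∑ i, w i * egamma s (A i)) * egamma s (eadd s (-gyrobarycenter s w A) X) +
      egamma s (gyrobarycenter s w A) * ((∑ i, w i) * c)) * hdist

end Gyrobarycenter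

noncomputable def circumgyrocenterWeights (s : ℝ) (A1 A2 A3 : EuclideanSpace ℝ (Fin n)) :
    Fin 3 → ℝ :=
  let γ12 := egamma s (eadd s (-A1) A2)
  let γ13 := egamma s (eadd s (-A1) A3)
  let γ23 := egamma s (eadd s (-A2) A3)
  ![(γ12 + γ13 - γ23 - 1) * (γ23 - 1), (γ12 - γ13 + γ23 - 1) * (γ13 - 1),
    (-γ12 + γ13 + γ23 - 1) * (γ12 - 1)]

noncomputable def circumgyrocenter (s : ℝ) (A1 A2 A3 : EuclideanSpace ℝ (Fin n)) :
    EuclideanSpace ℝ (Fin n) :=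
  gyrobarycenter s (circumgyrocenterWeights s A1 A2 A3) ![A1, A2, A3]

lemma egamma_neg_eadd_circumgyrocenter {A1 A2 A3 : EuclideanSpace ℝ (Fin n)} (hs : 0 < s)
    (hA : ∀ i, ‖![A1, A2, A3] i‖ < s)
    (hD : ∑ i, circumgyrocenterWeights s A1 A2 A3 i * egamma s (![A1, A2, A3] i) ≠ 0)
    (hO : ‖circumgyrocenter s A1 A2 A3‖ < s) (i : Fin 3) :
    egamma s (eadd s (-![A1, A2, A3] i) (circumgyrocenter s A1 A2 A3)) =
      egamma s (eadd s (-A1) (circumgyrocenter s A1 A2 A3)) := by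
  have hA1 : ‖A1‖ < s := hA 0
  have hA2 : ‖A2‖ < s := hA 1
  have hA3 : ‖A3‖ < s := hA 2
  rw [egamma_neg_eadd_comm hs (hA i) hO, egamma_neg_eadd_comm hs hA1 hO]
  apply mul_left_cancel₀ hD
  rw [circumgyrocenter, sum_mul_egamma_neg_gyrobarycenter_eadd hs hA hD hO (hA i),
    sum_mul_egamma_neg_gyrobarycenter_eadd hs hA hD hO hA1]
  congr 1
  -- the weights are chosen so that `∑ i, m i * γ i j` does not depend on `j`
  fin_cases i <;>
    simp only [circumgyrocenterWeights, Fin.sum_univ_three, Fin.isValue, Fin.zero_eta, Fin.mk_one,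
      Fin.reduceFinMk, Matrix.cons_val_zero, Matrix.cons_val_one, Matrix.cons_val, mul_one,
      egamma_neg_eadd_self hs hA1, egamma_neg_eadd_self hs hA2, egamma_neg_eadd_self hs hA3,
      egamma_neg_eadd_comm hs hA2 hA1, egamma_neg_eadd_comm hs hA3 hA1,
      egamma_neg_eadd_comm hs hA3 hA2] <;>
    ring

lemma sum_sum_mul_egamma_neg_eadd_fin_three {A1 A2 A3 : EuclideanSpace ℝ (Fin n)} (hs : 0 < s)
    (hA1 : ‖A1‖ < s) (hA2 : ‖A2‖ < s) (hA3 : ‖A3‖ < s) (w1 w2 w3 : ℝ) :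
    ∑ i, ∑ j, ![w1, w2, w3] i * ![w1, w2, w3] j *
        egamma s (eadd s (-![A1, A2, A3] i) (![A1, A2, A3] j)) =
      (w1 + w2 + w3) ^ 2 + 2 * (w1 * w2 * (egamma s (eadd s (-A1) A2) - 1) +
        w1 * w3 * (egamma s (eadd s (-A1) A3) - 1) +
          w2 * w3 * (egamma s (eadd s (-A2) A3) - 1)) := by
  simp only [Fin.sum_univ_three, Fin.isValue, Matrix.cons_val_zero, Matrix.cons_val_one,
    Matrix.cons_val, mul_one, egamma_neg_eadd_self hs hA1, egamma_neg_eadd_self hs hA2,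
    egamma_neg_eadd_self hs hA3, egamma_neg_eadd_comm hs hA2 hA1, egamma_neg_eadd_comm hs hA3 hA1,
    egamma_neg_eadd_comm hs hA3 hA2]
  ring

theorem point_to_circumgyrocenter_gyrodistance_general {n : ℕ} (s : ℝ) (hs : 0 < s)
    (A1 A2 A3 O A : EuclideanSpace ℝ (Fin n))
    (hA1 : ‖A1‖ < s) (hA2 : ‖A2‖ < s) (hA3 : ‖A3‖ < s)
    (h12 : A1 ≠ A2)
    (γ12 γ13 γ23 m1 m2 m3 D R : ℝ)
    (hγ12 : γ12 = egamma s (eadd s (-A1) A2))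
    (hγ13 : γ13 = egamma s (eadd s (-A1) A3))
    (hγ23 : γ23 = egamma s (eadd s (-A2) A3))
    (hm1 : m1 = (γ12 + γ13 - γ23 - 1) * (γ23 - 1))
    (hm2 : m2 = (γ12 - γ13 + γ23 - 1) * (γ13 - 1))
    (hm3 : m3 = (-γ12 + γ13 + γ23 - 1) * (γ12 - 1))
    (hD : D = m1 * egamma s A1 + m2 * egamma s A2 + m3 * egamma s A3)
    (hDne : D ≠ 0)
    (hO : O = D⁻¹ • ((m1 * egamma s A1) • A1 + (m2 * egamma s A2) • A2 +
      (m3 * egamma s A3) • A3))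
    (hOball : ‖O‖ < s)
    (hR : R = ‖eadd s (-A1) O‖)
    (w1 w2 w3 M W K : ℝ)
    (hM : M = w1 + w2 + w3) (hMne : M ≠ 0)
    (hW : W = w1 * egamma s A1 + w2 * egamma s A2 + w3 * egamma s A3)
    (hWne : W ≠ 0)
    (hA : A = W⁻¹ • ((w1 * egamma s A1) • A1 + (w2 * egamma s A2) • A2 +
      (w3 * egamma s A3) • A3))
    (hAball : ‖A‖ < s)
    (hK : K = w1 * w2 * (γ12 - 1) + w1 * w3 * (γ13 - 1) + w2 * w3 * (γ23 - 1)) :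
    ‖eadd s (-A) O‖ ^ 2 =
      R ^ 2 * (1 - 2 * s ^ 2 * K / (M ^ 2 * (gammaR s R) ^ 2 * R ^ 2)) := by
  subst hm1 hm2 hm3 hγ12 hγ13 hγ23 hD hW hR hM hK
  have hV : ∀ i, ‖![A1, A2, A3] i‖ < s := by intro i; fin_cases i <;> assumption
  have hO' : O = circumgyrocenter s A1 A2 A3 := by
    simp [hO, circumgyrocenter, gyrobarycenter, circumgyrocenterWeights, Fin.sum_univ_three]
  have hA' : A = gyrobarycenter s ![w1, w2, w3] ![A1, A2, A3] := by
    simp [hA, gyrobarycenter, Fin.sum_univ_three]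
  have hequi (i : Fin 3) :
      egamma s (eadd s (-![A1, A2, A3] i) O) = egamma s (eadd s (-A1) O) := by
    subst hO'
    exact egamma_neg_eadd_circumgyrocenter hs hV
      (by simpa [circumgyrocenterWeights, Fin.sum_univ_three] using hDne) hOball i
  have hdist := egamma_neg_gyrobarycenter_eadd_sq_mul_of_forall_egamma_eq hs hV
    (by simpa [Fin.sum_univ_three] using hWne) (hA' ▸ hAball) hOball hequi
  rw [← hA', sum_sum_mul_egamma_neg_eadd_fin_three hs hA1 hA2 hA3, Fin.sum_univ_three] at hdist
  exact norm_sq_eq_of_egamma_sq_mul_eq hs (norm_neg_eadd_lt hs hAball hOball)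
    (norm_neg_eadd_lt hs hA1 hOball)
    (norm_neg_eadd_ne_zero_of_egamma_neg_eadd_eq hs hA1 hA2 hOball h12 (hequi 1).symm) hMne
    (by simpa using hdist)

/-- **Point to Circumgyrocenter Gyrodistance Theorem.** -/
theorem point_to_circumgyrocenter_gyrodistance {n : ℕ} (hn : 2 ≤ n) (s : ℝ) (hs : 0 < s)
    (A1 A2 A3 O A : EuclideanSpace ℝ (Fin n))
    (hA1 : ‖A1‖ < s) (hA2 : ‖A2‖ < s) (hA3 : ‖A3‖ < s)
    (h12 : A1 ≠ A2) (h13 : A1 ≠ A3) (h23 : A2 ≠ A3)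
    (hncol : ¬ Collinear ℝ ({A1, A2, A3} : Set (EuclideanSpace ℝ (Fin n))))
    (γ12 γ13 γ23 m1 m2 m3 D R : ℝ)
    (hγ12 : γ12 = egamma s (eadd s (-A1) A2))
    (hγ13 : γ13 = egamma s (eadd s (-A1) A3))
    (hγ23 : γ23 = egamma s (eadd s (-A2) A3))
    (hm1 : m1 = (γ12 + γ13 - γ23 - 1) * (γ23 - 1))
    (hm2 : m2 = (γ12 - γ13 + γ23 - 1) * (γ13 - 1))
    (hm3 : m3 = (-γ12 + γ13 + γ23 - 1) * (γ12 - 1))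
    (hD : D = m1 * egamma s A1 + m2 * egamma s A2 + m3 * egamma s A3)
    (hDne : D ≠ 0)
    (hO : O = D⁻¹ • ((m1 * egamma s A1) • A1 + (m2 * egamma s A2) • A2 +
      (m3 * egamma s A3) • A3))
    (hOball : ‖O‖ < s)
    (hR : R = ‖eadd s (-A1) O‖)
    (w1 w2 w3 M W K : ℝ)
    (hM : M = w1 + w2 + w3) (hMne : M ≠ 0)
    (hW : W = w1 * egamma s A1 + w2 * egamma s A2 + w3 * egamma s A3)
    (hWne : W ≠ 0)
    (hA : A = W⁻¹ • ((w1 * egamma s A1) • A1 + (w2 * egamma s A2) • A2 +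
      (w3 * egamma s A3) • A3))
    (hAball : ‖A‖ < s)
    (hK : K = w1 * w2 * (γ12 - 1) + w1 * w3 * (γ13 - 1) + w2 * w3 * (γ23 - 1)) :
    ‖eadd s (-A) O‖ ^ 2 =
      R ^ 2 * (1 - 2 * s ^ 2 * K / (M ^ 2 * (gammaR s R) ^ 2 * R ^ 2)) :=
  point_to_circumgyrocenter_gyrodistance_general s hs A1 A2 A3 O A hA1 hA2 hA3 h12 γ12 γ13 γ23 m1 m2
    m3 D R hγ12 hγ13 hγ23 hm1 hm2 hm3 hD hDne hO hOball hR w1 w2 w3 M W K hM hMne hW hWne hA hAball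
    hK
end
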